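/- Let H be a finite connected simple graph with maximum degree Δ(H) = d ≥ 5, let p ≥ 3 and q ≥ 3 be integers with p + q = d + 1, let R be a graph with minimum degree δ(R) ≥ p − 1, and let G = K_{q+1} minus an edge. Let 𝔉 denote the family of subsets S ⊆ V(H) such that H[S] is R-free and |S| is maximum among all subsets inducing an R-free subgraph. Choose S ∈ 𝔉 so that the number of copies of G in H[V(H) ∖ S] is minimum over 𝔉, and, subject to that, the number of edges of H[V(H) ∖ S] is minimum. Let G′ be a copy of G in H[V(H) ∖ S] with vertex set V′ = {v′₀, …, v′_q}, where B′ = {v′₀, …, v′_{q−2}} induces a complete graph K_{q−1} and every vertex of B′ is adjacent to both v′_{q−1} and v′_q, let v ∈ B′, and let R′ be the (unique) copy of R that is a connected component of H[S ∪ {v}] containing v. Then for every vertex y of R′ with y ≠ v, there is a copy of G in H[((V(H) ∖ S) ∖ {v}) ∪ {y}] containing y, and y has exactly q neighbors in (V(H) ∖ S) ∖ {v}. -/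

import Mathlib

open SimpleGraph

/-- The complete graph on `n` vertices minus one edge (the edge between vertices `0` and `1`). -/
def KsubE (n : ℕ) : SimpleGraph (Fin n) where
  Adj a b := a ≠ b ∧ a.val + b.val ≠ 1
  symm := by
    constructor
    intro a b h
    exact ⟨h.1.symm, by omega⟩
  loopless := by
    constructor
    intro a h
    exact h.1 rfl

/-- `H` contains a (not necessarily induced) subgraph isomorphic to `R`. -/
def Contains {α : Type*} {β : Type*} (H : SimpleGraph α) (R : SimpleGraph β) : Prop :=
  ∃ f : R →g H, Function.Injective f

/-- The number of copies (subgraphs isomorphic to) of `KsubE (q+1)` of `H` avoiding `W`,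
i.e. copies of `K_{q+1} ∖ e` in `H[V ∖ W]`. -/
noncomputable def copiesOffCount {V : Type} [Fintype V] [DecidableEq V]
    (H : SimpleGraph V) (q : ℕ) (W : Finset V) : ℕ :=
  {C : H.Subgraph | C.verts ⊆ (↑W : Set V)ᶜ ∧ Nonempty (C.coe ≃g KsubE (q + 1))}.ncard

/-- The number of edges of `H[V ∖ W]`. -/
noncomputable def edgesOffCount {V : Type} [Fintype V] [DecidableEq V]
    (H : SimpleGraph V) (W : Finset V) : ℕ :=
  (H.induce ((↑W : Set V)ᶜ)).edgeSet.ncard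

/-!
Write `v` for the vertex of `B′` and `S' = S - y + v`. A copy of `R` in `H[S']` must use `v`
(as `H[S]` is `R`-free), so, `R` being connected, it lies in the component `R′` minus `y`, which
is too small: `S'` is again a maximum `R`-free set. The copies of `G` avoiding `S` and `S'` differ
exactly in those through `v`, resp. `y`; since `G′` passes through `v`, minimality of `S` yields a
copy through `y`.

The vertex `y` has at least `p - 1` neighbours in `R′`, hence at most `d - (p - 1) = q` outside
`S ∪ {v}`. If it had fewer, a copy of `G` through `y` would consist of `y`, an apex `z` and the
`q - 1` neighbours `N` of `y`, with `N ∪ {z}` a clique. Two different apexes leave a vertex of `N`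
with at most `p - 2` neighbours in `S'`, so adding it to `S'` keeps it `R`-free, against
maximality. A unique apex makes the copy counts of `S` and `S'` equal, while `H - S'` has fewer
edges than `H - S` (`v` has `q` neighbours outside `S ∪ {v}`, `y` fewer), against the edge
minimality of `S`.
-/

open Set

variable {V β : Type} {H : SimpleGraph V} {R : SimpleGraph β}

namespace SimpleGraph

lemma ncard_edgeSet_induce (A : Set V) :
    (H.induce A).edgeSet.ncard = (H.edgeSet ∩ A.sym2).ncard := by
  rw [← ncard_image_of_injective _ (Sym2.map.injective Subtype.val_injective)]
  congr 1
  ext e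
  induction e with
  | _ a b =>
    simp only [mem_image, Sym2.exists, Sym2.map_mk, Sym2.eq_iff, mem_inter_iff, mem_edgeSet,
      mk_mem_sym2_iff, comap_adj, Function.Embedding.subtype_apply, Subtype.exists]
    constructor
    · rintro ⟨a', ha', b', hb', h, ⟨rfl, rfl⟩ | ⟨rfl, rfl⟩⟩
      exacts [⟨h, ha', hb'⟩, ⟨h.symm, hb', ha'⟩]
    · exact fun ⟨h, ha, hb⟩ => ⟨a, ha, b, hb, h, .inl ⟨rfl, rfl⟩⟩

lemma ncard_edgeSet_induce_insert [Finite V] {A : Set V} {x : V} (hx : x ∉ A) :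
    (H.induce (insert x A)).edgeSet.ncard
      = (H.induce A).edgeSet.ncard + (H.neighborSet x ∩ A).ncard := by
  have hsplit : H.edgeSet ∩ (insert x A).sym2
      = H.edgeSet ∩ A.sym2 ∪ (fun u => s(x, u)) '' (H.neighborSet x ∩ A) := by
    ext e
    induction e with
    | _ a b =>
      simp only [mem_inter_iff, mem_edgeSet, mk_mem_sym2_iff, mem_insert_iff, mem_union,
        mem_image, mem_neighborSet, Sym2.eq_iff]
      constructor
      · rintro ⟨h, rfl | ha, rfl | hb⟩
        · exact (h.ne rfl).elim
        · exact .inr ⟨b, ⟨h, hb⟩, .inl ⟨rfl, rfl⟩⟩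
        · exact .inr ⟨a, ⟨h.symm, ha⟩, .inr ⟨rfl, rfl⟩⟩
        · exact .inl ⟨h, ha, hb⟩
      · rintro (h | ⟨u, ⟨h, hu⟩, ⟨rfl, rfl⟩ | ⟨rfl, rfl⟩⟩)
        · exact ⟨h.1, .inr h.2.1, .inr h.2.2⟩
        · exact ⟨h, .inl rfl, .inr hu⟩
        · exact ⟨h.symm, .inr hu, .inl rfl⟩
  have hdisj : Disjoint (H.edgeSet ∩ A.sym2) ((fun u => s(x, u)) '' (H.neighborSet x ∩ A)) := by
    rw [disjoint_right]
    rintro _ ⟨u, -, rfl⟩ ⟨-, h⟩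
    exact hx (mk_mem_sym2_iff.1 h).1
  rw [ncard_edgeSet_induce, ncard_edgeSet_induce, hsplit, ncard_union_eq hdisj,
    ncard_image_of_injective _ fun _ _ => Sym2.congr_right.1]

lemma ncard_neighborSet [Fintype V] [DecidableRel H.Adj] (u : V) :
    (H.neighborSet u).ncard = H.degree u := by
  rw [← card_neighborFinset_eq_degree, neighborFinset, ← ncard_eq_toFinset_card']

lemma ncard_neighborSet_inter_add_ncard_le [Fintype V] [DecidableRel H.Adj] {u : V}
    {W K : Set V} (hK : K ⊆ H.neighborSet u) (hKW : Disjoint K W) :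
    (H.neighborSet u ∩ W).ncard + K.ncard ≤ H.maxDegree :=
  calc (H.neighborSet u ∩ W).ncard + K.ncard = (H.neighborSet u ∩ W ∪ K).ncard :=
        (ncard_union_eq (hKW.symm.mono_left inter_subset_right)).symm
    _ ≤ (H.neighborSet u).ncard := ncard_le_ncard (union_subset inter_subset_left hK)
    _ ≤ H.maxDegree := (ncard_neighborSet u).trans_le (H.degree_le_maxDegree u)

lemma degree_le_ncard_neighborSet_inter [Finite V] [Fintype β] [DecidableRel R.Adj] {A : Set V}
    (f : R →g H.induce A) (hf : Function.Injective f) (b : β) :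
    R.degree b ≤ (H.neighborSet (f b) ∩ A).ncard := by
  rw [← ncard_neighborSet (H := R)]
  exact ncard_le_ncard_of_injOn (fun c => (f c : V)) (fun c hc => ⟨f.map_adj hc, (f c).2⟩)
    (fun c _ c' _ h => hf (Subtype.ext h))

lemma connected_induce_of_forall_mem_iff_reachable {T C : Set V} {v : V} (hv : v ∈ T)
    (hC : ∀ x, x ∈ C ↔ ∃ hx : x ∈ T, (H.induce T).Reachable ⟨v, hv⟩ ⟨x, hx⟩) :
    (H.induce C).Connected := by
  have hvC : v ∈ C := (hC v).2 ⟨hv, .rfl⟩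
  have lift : ∀ {s t : T} (p : (H.induce T).Walk s t) (hs : (s : V) ∈ C),
      ∃ ht : (t : V) ∈ C, (H.induce C).Reachable ⟨s, hs⟩ ⟨t, ht⟩ := by
    intro s t p
    induction p with
    | nil => exact fun hs => ⟨hs, .rfl⟩
    | @cons s b t hadj p ih =>
      intro hs
      have hb : (b : V) ∈ C := (hC b).2 ⟨b.2, ((hC s).1 hs).2.trans hadj.reachable⟩
      obtain ⟨ht, hbt⟩ := ih hb
      exact ⟨ht, (show (H.induce C).Adj ⟨s, hs⟩ ⟨b, hb⟩ from hadj).reachable.trans hbt⟩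
  have hreach : ∀ x : C, (H.induce C).Reachable ⟨v, hvC⟩ x := fun x => by
    obtain ⟨hx, ⟨p⟩⟩ := (hC x).1 x.2
    exact (lift p hvC).2
  exact (connected_iff _).2 ⟨fun x y => (hreach x).symm.trans (hreach y), ⟨⟨v, hvC⟩⟩⟩

namespace Subgraph

lemma ncard_verts_of_iso {γ : Type} [Fintype γ] {G : SimpleGraph γ} {D : H.Subgraph}
    (e : D.coe ≃g G) : D.verts.ncard = Fintype.card γ := by
  rw [← Nat.card_coe_set_eq, Nat.card_congr e.toEquiv, Nat.card_eq_fintype_card]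

def IsCompleteExcept (D : H.Subgraph) (a b : V) : Prop :=
  ∀ x ∈ D.verts, ∀ x' ∈ D.verts, (D.Adj x x' ↔ x ≠ x' ∧ s(x, x') ≠ s(a, b))

lemma IsCompleteExcept.symm {D : H.Subgraph} {a b : V} (hD : D.IsCompleteExcept a b) :
    D.IsCompleteExcept b a := fun x hx x' hx' => by
  rw [hD x hx x' hx', Sym2.eq_swap (a := a)]

lemma IsCompleteExcept.ext {D D' : H.Subgraph} {a b : V} (hD : D.IsCompleteExcept a b)
    (hD' : D'.IsCompleteExcept a b) (hverts : D.verts = D'.verts) : D = D' := by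
  refine Subgraph.ext hverts (funext₂ fun x x' => propext ⟨fun h => ?_, fun h => ?_⟩)
  · have hx := D.edge_vert h
    have hx' := D.edge_vert h.symm
    exact (hD' x (hverts ▸ hx) x' (hverts ▸ hx')).2 ((hD x hx x' hx').1 h)
  · have hx := D'.edge_vert h
    have hx' := D'.edge_vert h.symm
    exact (hD x (hverts ▸ hx) x' (hverts ▸ hx')).2 ((hD' x hx x' hx').1 h)

lemma IsCompleteExcept.isClique_verts_sdiff {D : H.Subgraph} {y z : V}
    (hD : D.IsCompleteExcept y z) : H.IsClique (D.verts \ {y}) := by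
  intro x hx x' hx' hne
  refine D.adj_sub ((hD x hx.1 x' hx'.1).2 ⟨hne, fun h => ?_⟩)
  have hy : y ∈ s(x, x') := h ▸ Sym2.mem_mk_left y z
  rcases Sym2.mem_iff.1 hy with rfl | rfl
  exacts [hx.2 rfl, hx'.2 rfl]

lemma exists_isCompleteExcept_of_iso_KsubE {n : ℕ} (hn : 2 ≤ n) {D : H.Subgraph}
    (e : D.coe ≃g KsubE n) :
    ∃ a ∈ D.verts, ∃ b ∈ D.verts, a ≠ b ∧ D.IsCompleteExcept a b := by
  let φ : Fin n → V := fun j => e.symm j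
  have hφ : Function.Injective φ := fun j k h => e.symm.injective (Subtype.ext h)
  refine ⟨φ ⟨0, by omega⟩, (e.symm _).2, φ ⟨1, by omega⟩, (e.symm _).2,
    fun h => by simpa using hφ h, ?_⟩
  intro x hx x' hx'
  obtain ⟨j, rfl⟩ : ∃ j, φ j = x := ⟨e ⟨x, hx⟩, by simp [φ]⟩
  obtain ⟨k, rfl⟩ : ∃ k, φ k = x' := ⟨e ⟨x', hx'⟩, by simp [φ]⟩
  have hpair : s(φ j, φ k) = s(φ ⟨0, by omega⟩, φ ⟨1, by omega⟩) ↔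
      s(j, k) = s(⟨0, by omega⟩, ⟨1, by omega⟩) := by
    simpa only [Sym2.map_mk] using (Sym2.map.injective hφ).eq_iff (a := s(j, k))
      (b := s(⟨0, by omega⟩, ⟨1, by omega⟩))
  rw [ne_eq, ne_eq, hpair, hφ.eq_iff, Sym2.eq_iff]
  rw [show D.Adj (φ j) (φ k) ↔ (KsubE n).Adj j k from e.symm.map_adj_iff]
  simp only [KsubE, Fin.ext_iff, ne_eq]
  omega

lemma exists_verts_eq_insert_of_ncard_lt [Finite V] {q : ℕ} (hq : 1 ≤ q) {D : H.Subgraph}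
    {X : Set V} {y : V} (hiso : Nonempty (D.coe ≃g KsubE (q + 1))) (hy : y ∈ D.verts)
    (hD : D.verts ⊆ insert y X) (hN : (H.neighborSet y ∩ X).ncard < q) :
    ∃ z ∈ X, z ∉ H.neighborSet y ∩ X ∧
      D.verts = insert y (insert z (H.neighborSet y ∩ X)) ∧ D.IsCompleteExcept y z := by
  obtain ⟨e⟩ := hiso
  have hcard : D.verts.ncard = q + 1 := by rw [ncard_verts_of_iso e, Fintype.card_fin]
  obtain ⟨a, ha, b, hb, hab, hadj⟩ := exists_isCompleteExcept_of_iso_KsubE (by omega) e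
  have hmemX : ∀ x ∈ D.verts, x ≠ y → x ∈ X := fun x hx hxy => (hD hx).resolve_left hxy
  -- if `y` were not on the missing edge, all `q` other vertices of `D` would be neighbours in `X`
  have hyab : y = a ∨ y = b := by
    by_contra! hy'
    have hsub : D.verts \ {y} ⊆ H.neighborSet y ∩ X := fun x ⟨hx, hxy⟩ =>
      ⟨D.adj_sub ((hadj y hy x hx).2 ⟨Ne.symm hxy, fun h =>
        (Sym2.mem_iff.1 (h ▸ Sym2.mem_mk_left y x)).elim hy'.1 hy'.2⟩), hmemX x hx hxy⟩
    have := ncard_le_ncard hsub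
    rw [ncard_sdiff_singleton_of_mem hy, hcard] at this
    omega
  obtain ⟨z, hz, hzy, hadj⟩ : ∃ z ∈ D.verts, z ≠ y ∧ D.IsCompleteExcept y z := by
    rcases hyab with rfl | rfl
    exacts [⟨b, hb, hab.symm, hadj⟩, ⟨a, ha, hab, hadj.symm⟩]
  have hsub : D.verts \ {y, z} ⊆ H.neighborSet y ∩ X := by
    rintro x ⟨hx, hxyz⟩
    simp only [mem_insert_iff, mem_singleton_iff, not_or] at hxyz
    have hyx : D.Adj y x :=
      (hadj y hy x hx).2 ⟨Ne.symm hxyz.1, fun h => hxyz.2 (Sym2.congr_right.1 h)⟩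
    exact ⟨D.adj_sub hyx, hmemX x hx hxyz.1⟩
  have hN' : H.neighborSet y ∩ X = D.verts \ {y, z} := by
    refine (eq_of_subset_of_ncard_le hsub ?_).symm
    rw [ncard_sdiff (insert_subset hy (singleton_subset_iff.2 hz)), ncard_pair hzy.symm, hcard]
    omega
  refine ⟨z, hmemX z hz hzy, fun h => (hN' ▸ h).2 (by simp), ?_, hadj⟩
  rw [hN']
  ext x
  by_cases hxy : x = y
  · simp [hxy, hy]
  by_cases hxz : x = z
  · simp [hxz, hz]
  · simp [hxy, hxz]

end Subgraph

end SimpleGraph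

lemma Contains.of_forall_mem {A B : Set V} (f : R →g H.induce A) (hf : Function.Injective f)
    (hB : ∀ b, (f b : V) ∈ B) : Contains (H.induce B) R :=
  ⟨⟨fun b => ⟨f b, hB b⟩, fun hab => f.map_adj hab⟩,
    fun _ _ h => hf (Subtype.ext (Subtype.mk.inj h))⟩

lemma not_contains_induce_mono {A B : Set V} (hAB : A ⊆ B) (hB : ¬Contains (H.induce B) R) :
    ¬Contains (H.induce A) R :=
  fun ⟨f, hf⟩ => hB (.of_forall_mem f hf fun b => hAB (f b).2)

lemma exists_apply_eq_of_not_contains_induce_sdiff {A : Set V} {x : V}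
    (hA : ¬Contains (H.induce (A \ {x})) R) (f : R →g H.induce A) (hf : Function.Injective f) :
    ∃ b, (f b : V) = x := by
  by_contra! h
  exact hA (.of_forall_mem f hf fun b => ⟨(f b).2, h b⟩)

lemma not_contains_induce_insert_of_ncard_lt [Finite V] [Fintype β] [DecidableRel R.Adj]
    {W : Set V} {u : V} (hW : ¬Contains (H.induce W) R)
    (hu : (H.neighborSet u ∩ W).ncard < R.minDegree) :
    ¬Contains (H.induce (insert u W)) R := by
  rintro ⟨f, hf⟩
  obtain ⟨b, hb⟩ := exists_apply_eq_of_not_contains_induce_sdiff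
    (not_contains_induce_mono (sdiff_singleton_subset_iff.2 subset_rfl) hW) f hf
  have hdeg := degree_le_ncard_neighborSet_inter f hf b
  rw [hb, inter_insert_of_notMem H.notMem_neighborSet_self] at hdeg
  exact ((R.minDegree_le_degree b).trans hdeg).not_gt hu

lemma apply_mem_of_reachable_iff_of_connected {T C A : Set V} {v : V} (hv : v ∈ T)
    (hC : ∀ x, x ∈ C ↔ ∃ hx : x ∈ T, (H.induce T).Reachable ⟨v, hv⟩ ⟨x, hx⟩)
    (hR : R.Connected) (hAT : A ⊆ T) (f : R →g H.induce A) {b₀ : β}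
    (hb₀ : (f b₀ : V) = v) (b : β) : (f b : V) ∈ C := by
  have hreach := ((hR.preconnected b₀ b).map f).map (H.induceHomOfLE hAT).toHom
  have hv₀ : (⟨v, hv⟩ : T) = H.induceHomOfLE hAT (f b₀) := Subtype.ext hb₀.symm
  exact (hC _).2 ⟨hAT (f b).2, hv₀ ▸ hreach⟩

-- A copy of the connected graph `R` through `v` stays in the component `C ≅ R` of `v`,
-- so it would have to cover all of `C`.
lemma not_contains_induce_of_component_not_subset [Finite V] {T C A : Set V} {v : V} (hv : v ∈ T)
    (hC : ∀ x, x ∈ C ↔ ∃ hx : x ∈ T, (H.induce T).Reachable ⟨v, hv⟩ ⟨x, hx⟩)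
    (hiso : Nonempty (H.induce C ≃g R)) (hAT : A ⊆ T) (hCA : ¬C ⊆ A)
    (hA : ¬Contains (H.induce (A \ {v})) R) : ¬Contains (H.induce A) R := by
  rintro ⟨f, hf⟩
  obtain ⟨y, hyC, hyA⟩ := not_subset.1 hCA
  obtain ⟨φ⟩ := hiso
  have hR : R.Connected := φ.connected_iff.1 (connected_induce_of_forall_mem_iff_reachable hv hC)
  obtain ⟨b₀, hb₀⟩ := exists_apply_eq_of_not_contains_induce_sdiff hA f hf
  have hle : Nat.card β ≤ (C \ {y}).ncard := by
    rw [← ncard_univ]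
    exact ncard_le_ncard_of_injOn (fun b => (f b : V))
      (fun b _ => ⟨apply_mem_of_reachable_iff_of_connected hv hC hR hAT f hb₀ b,
        fun h => hyA (h ▸ (f b).2)⟩)
      (fun b _ b' _ h => hf (Subtype.ext h))
  rw [ncard_sdiff_singleton_of_mem hyC, ← Nat.card_congr φ.toEquiv, Nat.card_coe_set_eq] at hle
  have := (ncard_pos (toFinite C)).2 ⟨y, hyC⟩
  omega

lemma ncard_neighborSet_inter_add_minDegree_le [Fintype V] [DecidableRel H.Adj] [Fintype β]
    [DecidableRel R.Adj] {C X : Set V} (φ : H.induce C ≃g R) {y : V} (hy : y ∈ C)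
    (hXC : Disjoint X C) : (H.neighborSet y ∩ X).ncard + R.minDegree ≤ H.maxDegree := by
  have hdeg := degree_le_ncard_neighborSet_inter φ.symm.toHom φ.symm.injective (φ ⟨y, hy⟩)
  simp only [RelHom.coeFn_mk, RelIso.coe_fn_toEquiv, RelIso.symm_apply_apply] at hdeg
  have := ncard_neighborSet_inter_add_ncard_le (H := H) (u := y) inter_subset_left
    (hXC.mono_left inter_subset_right)
  have := R.minDegree_le_degree (φ ⟨y, hy⟩)
  omega

section LabelledCopy

variable {q : ℕ} {w : Fin (q + 1) → V}

lemma adj_of_val_le_sub_two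
    (hB : ∀ i j : Fin (q + 1), (i : ℕ) ≤ q - 2 → (j : ℕ) ≤ q - 2 → i ≠ j →
      H.Adj (w i) (w j))
    (hB' : ∀ i : Fin (q + 1), (i : ℕ) ≤ q - 2 →
      H.Adj (w i) (w ⟨q - 1, by omega⟩) ∧ H.Adj (w i) (w ⟨q, by omega⟩))
    {k l : Fin (q + 1)} (hk : (k : ℕ) ≤ q - 2) (hkl : k ≠ l) : H.Adj (w k) (w l) := by
  rcases (by omega : (l : ℕ) ≤ q - 2 ∨ (l : ℕ) = q - 1 ∨ (l : ℕ) = q) with hl | hl | hl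
  · exact hB k l hk hl hkl
  · rw [show l = ⟨q - 1, by omega⟩ from Fin.ext hl]
    exact (hB' k hk).1
  · rw [show l = ⟨q, by omega⟩ from Fin.ext hl]
    exact (hB' k hk).2

lemma exists_subgraph_iso_KsubE (hw : Function.Injective w)
    (hB : ∀ i j : Fin (q + 1), (i : ℕ) ≤ q - 2 → (j : ℕ) ≤ q - 2 → i ≠ j →
      H.Adj (w i) (w j))
    (hB' : ∀ i : Fin (q + 1), (i : ℕ) ≤ q - 2 →
      H.Adj (w i) (w ⟨q - 1, by omega⟩) ∧ H.Adj (w i) (w ⟨q, by omega⟩)) :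
    ∃ D : H.Subgraph, D.verts = range w ∧ Nonempty (D.coe ≃g KsubE (q + 1)) := by
  -- relabel so that the missing edge `{0, 1}` of `KsubE` goes to the apexes `q - 1, q`
  let σ : Fin (q + 1) → Fin (q + 1) := fun k =>
    ⟨if (k : ℕ) < 2 then k + q - 1 else k - 2, by split_ifs <;> omega⟩
  have hσ : Function.Injective σ := by
    intro a b h
    have := congrArg Fin.val h
    simp only [σ] at this
    ext
    split_ifs at this <;> omega
  have hσle : ∀ {k : Fin (q + 1)}, ¬(k : ℕ) < 2 → (σ k : ℕ) ≤ q - 2 := fun hk => by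
    simp only [σ, if_neg hk]
    omega
  have hadj : ∀ {a b}, (KsubE (q + 1)).Adj a b → H.Adj (w (σ a)) (w (σ b)) := by
    rintro a b ⟨hab, hsum⟩
    have hne : σ a ≠ σ b := hσ.ne hab
    by_cases ha : (a : ℕ) < 2
    · have hb : ¬(b : ℕ) < 2 := by have := Fin.val_ne_of_ne hab; omega
      exact (adj_of_val_le_sub_two hB hB' (hσle hb) hne.symm).symm
    · exact adj_of_val_le_sub_two hB hB' (hσle ha) hne
  let f : Copy (KsubE (q + 1)) H := ⟨⟨w ∘ σ, hadj⟩, hw.comp hσ⟩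
  refine ⟨f.toSubgraph, ?_, ⟨f.isoToSubgraph.symm⟩⟩
  simp only [f, Copy.toSubgraph, Subgraph.map_verts, Subgraph.verts_top, image_univ]
  exact (Finite.injective_iff_surjective.1 hσ).range_comp w

lemma le_ncard_neighborSet_inter [Finite V] (hw : Function.Injective w)
    (hB : ∀ i j : Fin (q + 1), (i : ℕ) ≤ q - 2 → (j : ℕ) ≤ q - 2 → i ≠ j →
      H.Adj (w i) (w j))
    (hB' : ∀ i : Fin (q + 1), (i : ℕ) ≤ q - 2 →
      H.Adj (w i) (w ⟨q - 1, by omega⟩) ∧ H.Adj (w i) (w ⟨q, by omega⟩))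
    {i : Fin (q + 1)} (hi : (i : ℕ) ≤ q - 2) {X : Set V} (hX : ∀ j, j ≠ i → w j ∈ X) :
    q ≤ (H.neighborSet (w i) ∩ X).ncard := by
  have hsub : range w \ {w i} ⊆ H.neighborSet (w i) ∩ X := by
    rintro _ ⟨⟨j, rfl⟩, hj⟩
    have hji : j ≠ i := fun h => hj (h ▸ rfl)
    exact ⟨adj_of_val_le_sub_two hB hB' hi hji.symm, hX j hji⟩
  have := ncard_le_ncard hsub
  rwa [ncard_sdiff_singleton_of_mem (mem_range_self i), ncard_range_of_injective hw,
    Nat.card_eq_fintype_card, Fintype.card_fin, Nat.add_sub_cancel] at this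

end LabelledCopy

lemma card_insert_erase [DecidableEq V] {S : Finset V} {v y : V} (hv : v ∉ S) (hy : y ∈ S) :
    (insert v (S.erase y)).card = S.card := by
  rw [Finset.card_insert_of_notMem fun h => hv (Finset.mem_of_mem_erase h),
    Finset.card_erase_add_one hy]

lemma compl_insert_erase_sdiff [DecidableEq V] {S : Finset V} {v y : V} (hy : y ∈ S) :
    (↑(insert v (S.erase y)) : Set V)ᶜ \ {y} = (↑S : Set V)ᶜ \ {v} := by
  ext x
  by_cases hxy : x = y
  · simp [hxy, hy]
  · simp [hxy, and_comm]

section Counting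

variable [Fintype V] [DecidableEq V]

def copiesThrough (H : SimpleGraph V) (q : ℕ) (W : Finset V) (x : V) : Set H.Subgraph :=
  {D | D.verts ⊆ (↑W : Set V)ᶜ ∧ x ∈ D.verts ∧ Nonempty (D.coe ≃g KsubE (q + 1))}

lemma copiesOffCount_eq_add (q : ℕ) (W : Finset V) (x : V) :
    copiesOffCount H q W = copiesOffCount H q (insert x W) + (copiesThrough H q W x).ncard := by
  have hdisj : Disjoint
      {D : H.Subgraph |
        D.verts ⊆ (↑(insert x W) : Set V)ᶜ ∧ Nonempty (D.coe ≃g KsubE (q + 1))}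
      (copiesThrough H q W x) := by
    rw [Set.disjoint_left]
    rintro D ⟨hD, -⟩ ⟨-, hx, -⟩
    exact hD hx (Finset.mem_insert_self x W)
  rw [copiesOffCount, copiesOffCount, ← ncard_union_eq hdisj]
  congr 1
  ext D
  constructor
  · rintro ⟨hD, hiso⟩
    by_cases hx : x ∈ D.verts
    · exact .inr ⟨hD, hx, hiso⟩
    · refine .inl ⟨fun y hy hyW => ?_, hiso⟩
      rcases Finset.mem_insert.1 hyW with rfl | hyW
      exacts [hx hy, hD hy hyW]
  · rintro (⟨hD, hiso⟩ | ⟨hD, -, hiso⟩)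
    · exact ⟨hD.trans (compl_subset_compl.2 (by simp)), hiso⟩
    · exact ⟨hD, hiso⟩

lemma edgesOffCount_eq_add {W : Finset V} {x : V} (hx : x ∉ W) :
    edgesOffCount H W
      = edgesOffCount H (insert x W) + (H.neighborSet x ∩ ((↑W : Set V)ᶜ \ {x})).ncard := by
  have hW : (↑(insert x W) : Set V)ᶜ = (↑W : Set V)ᶜ \ {x} := by
    ext y
    simp [and_comm]
  rw [edgesOffCount, edgesOffCount, hW, ← ncard_edgeSet_induce_insert (fun h => h.2 rfl),
    insert_sdiff_singleton, insert_eq_of_mem (by simpa)]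

end Counting

lemma ncard_neighborSet_inter_add_le_of_isClique [Fintype V] [DecidableRel H.Adj]
    {W N : Set V} {u y z z' : V} (hN : N ⊆ H.neighborSet y) (hz : H.IsClique (insert z N))
    (hz' : H.IsClique (insert z' N)) (hzz' : z ≠ z') (hzN : z ∉ N) (hz'N : z' ∉ N)
    (hu : u ∈ N) (hy : y ∉ insert z (insert z' N))
    (hW : Disjoint (insert y (insert z (insert z' N))) W) :
    (H.neighborSet u ∩ W).ncard + N.ncard + 2 ≤ H.maxDegree := by
  let K := insert y (insert z (insert z' (N \ {u})))
  have hK : K ⊆ H.neighborSet u := by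
    rintro x (rfl | rfl | rfl | ⟨hxN, hxu⟩)
    · exact (hN hu).symm
    · exact hz (mem_insert_of_mem _ hu) (mem_insert _ _) fun h => hzN (h ▸ hu)
    · exact hz' (mem_insert_of_mem _ hu) (mem_insert _ _) fun h => hz'N (h ▸ hu)
    · exact hz (mem_insert_of_mem _ hu) (mem_insert_of_mem _ hxN) (Ne.symm hxu)
  have hKcard : K.ncard = N.ncard + 2 := by
    have hz'K : z' ∉ N \ {u} := fun h => hz'N h.1
    have hzK : z ∉ insert z' (N \ {u}) := by
      rintro (h | h)
      exacts [hzz' h, hzN h.1]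
    have hyK : y ∉ insert z (insert z' (N \ {u})) :=
      fun h => hy (insert_subset_insert (insert_subset_insert sdiff_subset) h)
    rw [ncard_insert_of_notMem hyK, ncard_insert_of_notMem hzK, ncard_insert_of_notMem hz'K,
      ncard_sdiff_singleton_of_mem hu]
    have := (ncard_pos (toFinite N)).2 ⟨u, hu⟩
    omega
  have hKW : Disjoint K W :=
    hW.mono_left (insert_subset_insert (insert_subset_insert (insert_subset_insert sdiff_subset)))
  have := ncard_neighborSet_inter_add_ncard_le hK hKW
  omega

lemma copiesThrough_subsingleton [Fintype V] [DecidableEq V] [DecidableRel H.Adj] [Fintype β]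
    [DecidableRel R.Adj] {p q : ℕ} (hq : 2 ≤ q) (hΔ : H.maxDegree + 1 ≤ p + q)
    (hδ : p - 1 ≤ R.minDegree) {W : Finset V} (hW : ¬Contains (H.induce ↑W) R)
    (hWmax : ∀ W' : Finset V, ¬Contains (H.induce ↑W') R → W'.card ≤ W.card) {y : V}
    (hyW : y ∉ W) (hy : (H.neighborSet y ∩ ((↑W : Set V)ᶜ \ {y})).ncard < q) :
    (copiesThrough H q W y).Subsingleton := by
  set X : Set V := (↑W : Set V)ᶜ \ {y}
  have hWX : (↑W : Set V)ᶜ = insert y X := by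
    rw [insert_sdiff_singleton, insert_eq_of_mem (by simpa)]
  have hyX : y ∉ X := fun h => h.2 rfl
  intro D hD D' hD'
  obtain ⟨z, hzX, hzN, hDverts, hDadj⟩ :=
    Subgraph.exists_verts_eq_insert_of_ncard_lt (by omega) hD.2.2 hD.2.1 (hWX ▸ hD.1) hy
  obtain ⟨z', hz'X, hz'N, hD'verts, hD'adj⟩ :=
    Subgraph.exists_verts_eq_insert_of_ncard_lt (by omega) hD'.2.2 hD'.2.1 (hWX ▸ hD'.1) hy
  obtain rfl | hzz' := eq_or_ne z z'
  · exact hDadj.ext hD'adj (hDverts.trans hD'verts.symm)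
  -- two apexes over the clique `N`: then a vertex `u ∈ N` has too few neighbours in `W`
  exfalso
  set N := H.neighborSet y ∩ X
  have hyzN : ∀ {z}, z ∈ X → y ∉ insert z N := fun hz h =>
    hyX (insert_subset hz inter_subset_right h)
  have hclique : ∀ {D : H.Subgraph} {z}, z ∈ X → D.verts = insert y (insert z N) →
      D.IsCompleteExcept y z → H.IsClique (insert z N) := fun hz hverts hadj => by
    simpa [hverts, insert_sdiff_self_of_notMem (hyzN hz)] using hadj.isClique_verts_sdiff
  have hNcard : N.ncard + 1 = q := by
    have := Subgraph.ncard_verts_of_iso hD.2.2.some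
    rw [hDverts, ncard_insert_of_notMem (hyzN hzX), ncard_insert_of_notMem hzN,
      Fintype.card_fin] at this
    omega
  obtain ⟨u, hu⟩ : N.Nonempty := nonempty_of_ncard_ne_zero (by omega)
  have hzz'N : insert z (insert z' N) ⊆ X :=
    insert_subset hzX (insert_subset hz'X inter_subset_right)
  have hlow := ncard_neighborSet_inter_add_le_of_isClique (N := N) inter_subset_left
    (hclique hzX hDverts hDadj) (hclique hz'X hD'verts hD'adj) hzz' hzN hz'N hu
    (fun h => hyX (hzz'N h))
    (subset_compl_iff_disjoint_right.1 (hWX ▸ insert_subset_insert hzz'N))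
  have huW : u ∉ W := fun h => hu.2.1 h
  have := hWmax (insert u W) (by
    rw [Finset.coe_insert]
    exact not_contains_induce_insert_of_ncard_lt hW (by omega))
  rw [Finset.card_insert_of_notMem huW] at this
  omega

theorem statement12 {V : Type} [Fintype V] [DecidableEq V]
    (H : SimpleGraph V) [DecidableRel H.Adj]
    (d : ℕ) (hd : H.maxDegree = d)
    (p q : ℕ) (hq : 3 ≤ q) (hpq : p + q = d + 1)
    {β : Type} [Fintype β] (R : SimpleGraph β) [DecidableRel R.Adj]
    (hδR : p - 1 ≤ R.minDegree)
    -- `S` belongs to `𝔉` : `H[S]` is `R`-free and `|S|` is maximum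
    (S : Finset V)
    (hSfree : ¬ Contains (H.induce (S : Set V)) R)
    (hSmax : ∀ W : Finset V, ¬ Contains (H.induce (W : Set V)) R → W.card ≤ S.card)
    -- among members of `𝔉`, `S` minimizes the number of copies of `G = K_{q+1} ∖ e`
    -- in `H[V ∖ S]`
    (hminCopies : ∀ W : Finset V, ¬ Contains (H.induce (W : Set V)) R →
      W.card = S.card → copiesOffCount H q S ≤ copiesOffCount H q W)
    -- and, subject to that, minimizes the number of edges of `H[V ∖ S]`
    (hminEdges : ∀ W : Finset V, ¬ Contains (H.induce (W : Set V)) R →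
      W.card = S.card → copiesOffCount H q W = copiesOffCount H q S →
      edgesOffCount H S ≤ edgesOffCount H W)
    -- `G′` is a copy of `G` in `H[V ∖ S]` with vertices `w 0, …, w q`, where
    -- `B′ = {w 0, …, w (q-2)}` induces a complete graph and each of its vertices is
    -- adjacent to both `w (q-1)` and `w q`
    (w : Fin (q + 1) → V) (hwinj : Function.Injective w)
    (hwS : ∀ i, w i ∉ S)
    (hB : ∀ i j : Fin (q + 1), (i : ℕ) ≤ q - 2 → (j : ℕ) ≤ q - 2 → i ≠ j →
      H.Adj (w i) (w j))
    (hB' : ∀ i : Fin (q + 1), (i : ℕ) ≤ q - 2 →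
      H.Adj (w i) (w ⟨q - 1, by omega⟩) ∧ H.Adj (w i) (w ⟨q, by omega⟩))
    -- `v = w i` is a vertex of `B′`
    (i : Fin (q + 1)) (hi : (i : ℕ) ≤ q - 2)
    -- `C` is the vertex set of the connected component of `H[S ∪ {v}]` containing `v`,
    -- and this component (the copy `R′`) is isomorphic to `R`
    (C : Set V)
    (hcomp : ∀ x : V, x ∈ C ↔ ∃ hx : x ∈ (↑(insert (w i) S) : Set V),
      (H.induce (↑(insert (w i) S) : Set V)).Reachable ⟨w i, by simp⟩ ⟨x, hx⟩)
    (hiso : Nonempty (H.induce C ≃g R)) :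
    -- then every vertex `y ≠ v` of `R′` lies in a copy of `G` in
    -- `H[((V ∖ S) ∖ {v}) ∪ {y}]`, and `y` has exactly `q` neighbors in `(V ∖ S) ∖ {v}`
    ∀ y ∈ C, y ≠ w i →
      (∃ C' : H.Subgraph,
        C'.verts ⊆ ((↑S : Set V)ᶜ \ {w i}) ∪ {y} ∧ y ∈ C'.verts ∧
        Nonempty (C'.coe ≃g KsubE (q + 1))) ∧
      (H.neighborSet y ∩ ((↑S : Set V)ᶜ \ {w i})).ncard = q := by
  intro y hyC hyv
  set v := w i
  have hvS : v ∉ S := hwS i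
  have hCsub : C ⊆ insert v ↑S := fun x hx => by simpa using ((hcomp x).1 hx).1
  have hyS : y ∈ S := by simpa [hyv] using hCsub hyC
  set S' := insert v (S.erase y)
  have hyS' : y ∉ S' := by simp [S', hyv]
  have hS'card : S'.card = S.card := card_insert_erase hvS hyS
  have hinsert : insert y S' = insert v S := by rw [Finset.insert_comm, Finset.insert_erase hyS]
  have hS'X : (↑S' : Set V)ᶜ \ {y} = (↑S : Set V)ᶜ \ {v} := compl_insert_erase_sdiff hyS
  have hS'free : ¬Contains (H.induce ↑S') R :=
    not_contains_induce_of_component_not_subset _ hcomp hiso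
      (Finset.coe_subset.2 (Finset.insert_subset_insert v (S.erase_subset y)))
      (fun h => hyS' (h hyC))
      (not_contains_induce_mono (fun x ⟨hx, hxv⟩ => by simp_all [S']) hSfree)
  have hcopies := copiesOffCount_eq_add (H := H) q S v
  have hcopies' := copiesOffCount_eq_add (H := H) q S' y
  rw [hinsert] at hcopies'
  have hmin := hminCopies S' hS'free hS'card
  obtain ⟨D₀, hD₀, hiso₀⟩ := exists_subgraph_iso_KsubE hwinj hB hB'
  have hG' : D₀ ∈ copiesThrough H q S v :=
    ⟨hD₀ ▸ range_subset_iff.2 hwS, hD₀ ▸ mem_range_self i, hiso₀⟩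
  have hpos := (ncard_pos (toFinite _)).2 ⟨D₀, hG'⟩
  obtain ⟨D₁, hD₁⟩ : (copiesThrough H q S' y).Nonempty :=
    nonempty_of_ncard_ne_zero (by omega)
  refine ⟨⟨D₁, ?_, hD₁.2.1, hD₁.2.2⟩, ?_⟩
  · rw [← hS'X, sdiff_union_self]
    exact hD₁.1.trans subset_union_left
  obtain ⟨φ⟩ := hiso
  have hXC : Disjoint ((↑S : Set V)ᶜ \ {v}) C := Set.disjoint_left.2 fun x hx hxC =>
    (mem_insert_iff.1 (hCsub hxC)).elim hx.2 hx.1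
  have hNle := ncard_neighborSet_inter_add_minDegree_le φ hyC hXC
  refine le_antisymm (by omega) (not_lt.1 fun hNlt => ?_)
  -- fewer than `q` neighbours: a unique copy through `y`, but fewer edges than for `S`
  have hsub := copiesThrough_subsingleton (by omega) (by omega) hδR hS'free
    (fun W hW => hS'card ▸ hSmax W hW) hyS' (hS'X ▸ hNlt)
  have hedges := hminEdges S' hS'free hS'card
    (by have := ncard_le_one_iff_subsingleton.2 hsub; omega)
  rw [edgesOffCount_eq_add hvS, edgesOffCount_eq_add hyS', hinsert, hS'X] at hedges
  have hv : q ≤ (H.neighborSet v ∩ ((↑S : Set V)ᶜ \ {v})).ncard :=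
    le_ncard_neighborSet_inter hwinj hB hB' hi fun j hj => ⟨hwS j, hwinj.ne hj⟩
  omega
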